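/- arXiv:1603.05526 — 2 statements merged into one kernel-verified Lean document; each statement's English description precedes it below -/
import Mathlib

section
/- Let κ be regular and λ = μ⁺ with μ singular. The forcing S of partial square sequences (conditions are sequences ⟨c_i : i ≤ γ⟩ for γ < λ satisfying the partial square requirements, ordered by end extension) is κ-directed closed: any directed subset of S of size < κ has a lower bound. -/
/-! A directed family of conditions under end extension is a chain whose members agree
wherever both are defined, so their union is again a coherent sequence. Top it at the
supremum of the members' tops: this is below `λ` because `λ = μ⁺` is regular and the family
has fewer than `κ < λ` members. Every level of cofinality `≥ κ` below that supremum already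
occurs in some member, since otherwise it would be the supremum itself, whose cofinality is
at most the size of the family. -/

universe u

/-- A condition in the partial-square forcing `S` on `λ = μ⁺`: a sequence
`⟨c_i : i ≤ top⟩` with `top < λ`, each `c_i` a set of fewer than μ clubs of `i`
of order type ≤ μ, nonempty when `cf(i) ≥ κ`, coherent at accumulation points. -/
structure SqCond (κ μ lam : Cardinal.{u}) where
  top : Ordinal.{u}
  top_lt : top < lam.ord
  c : Ordinal.{u} → Set (Set Ordinal.{u})
  small : ∀ i ≤ top, Cardinal.mk (c i) < Cardinal.lift.{u + 1} μ
  nonemp : ∀ i ≤ top, κ ≤ i.cof → (c i).Nonempty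
  club : ∀ i ≤ top, ∀ D ∈ c i, D ⊆ Set.Iio i ∧ (∀ γ < i, ∃ δ ∈ D, γ ≤ δ) ∧
    (∀ β < i, (D ∩ Set.Iio β).Nonempty → sSup (D ∩ Set.Iio β) = β → β ∈ D) ∧
    Ordinal.type (Subrel ((· < ·) : Ordinal.{u} → Ordinal.{u} → Prop) (· ∈ D)) ≤
      Ordinal.lift.{u + 1} μ.ord
  coh : ∀ i ≤ top, ∀ D ∈ c i, ∀ β < i,
    (D ∩ Set.Iio β).Nonempty → sSup (D ∩ Set.Iio β) = β → D ∩ Set.Iio β ∈ c β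

/-- `s` end-extends `t` (i.e. `s` is a stronger condition than `t`). -/
def SqExt {κ μ lam : Cardinal.{u}} (s t : SqCond κ μ lam) : Prop :=
  t.top ≤ s.top ∧ ∀ i ≤ t.top, s.c i = t.c i

namespace Ordinal

theorem iSup_lt_of_mk_lt_lift_cof {β : Type (u + 1)} {f : β → Ordinal.{u}} {a : Ordinal.{u}}
    (hβ : Cardinal.mk β < Cardinal.lift.{u + 1} a.cof) (hf : ∀ j, f j < a) : ⨆ j, f j < a := by
  refine lift_iSup_lt_of_lt_cof ?_ hf
  rwa [Cardinal.lift_id'.{u, u + 1}, ← lift_cof]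

theorem exists_le_of_le_iSup_of_mk_lt_lift_cof {β : Type (u + 1)} {f : β → Ordinal.{u}}
    {i : Ordinal.{u}} (hi : i ≤ ⨆ j, f j) (hβ : Cardinal.mk β < Cardinal.lift.{u + 1} i.cof) :
    ∃ j, i ≤ f j := by
  by_contra! hlt
  exact (iSup_lt_of_mk_lt_lift_cof hβ hlt).not_ge hi

end Ordinal

namespace SqCond

variable {κ μ lam : Cardinal.{u}}

def unionLevel (A : Set (SqCond κ μ lam)) (i : Ordinal.{u}) : Set (Set Ordinal.{u}) :=
  {D | ∃ t ∈ A, i ≤ t.top ∧ D ∈ t.c i}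

theorem unionLevel_eq {A : Set (SqCond κ μ lam)} (hA : DirectedOn (flip SqExt) A)
    {t : SqCond κ μ lam} (ht : t ∈ A) {i : Ordinal.{u}} (hi : i ≤ t.top) :
    unionLevel A i = t.c i := by
  ext D
  refine ⟨fun ⟨s, hs, his, hD⟩ => ?_, fun hD => ⟨t, ht, hi, hD⟩⟩
  obtain ⟨r, -, ⟨-, hrs⟩, ⟨-, hrt⟩⟩ := hA s hs t ht
  rwa [← hrt i hi, hrs i his]

theorem unionLevel_eq_empty {A : Set (SqCond κ μ lam)} {i : Ordinal.{u}}
    (hi : ∀ t ∈ A, t.top < i) : unionLevel A i = ∅ :=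
  Set.eq_empty_of_forall_notMem fun _ ⟨t, ht, hit, _⟩ => (hit.trans_lt (hi t ht)).false

def union (A : Set (SqCond κ μ lam)) (hA : DirectedOn (flip SqExt) A) (hμ : μ ≠ 0)
    (top : Ordinal.{u}) (htop : top < lam.ord)
    (hcover : ∀ i ≤ top, κ ≤ i.cof → ∃ t ∈ A, i ≤ t.top) : SqCond κ μ lam where
  top := top
  top_lt := htop
  c := unionLevel A
  small i _ := by
    by_cases h : ∃ t ∈ A, i ≤ t.top
    · obtain ⟨t, ht, hit⟩ := h
      rw [unionLevel_eq hA ht hit]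
      exact t.small i hit
    · push Not at h
      rw [unionLevel_eq_empty h, Cardinal.mk_eq_zero, pos_iff_ne_zero, Ne, Cardinal.lift_eq_zero]
      exact hμ
  nonemp i hi hcof := by
    obtain ⟨t, ht, hit⟩ := hcover i hi hcof
    rw [unionLevel_eq hA ht hit]
    exact t.nonemp i hit hcof
  club i _ D := fun ⟨t, _, hit, hD⟩ => t.club i hit D hD
  coh i _ D := fun ⟨t, ht, hit, hD⟩ β hβ hne hsup => by
    rw [unionLevel_eq hA ht (hβ.le.trans hit)]
    exact t.coh i hit D hD β hβ hne hsup

theorem sqExt_union {A : Set (SqCond κ μ lam)} (hA : DirectedOn (flip SqExt) A) (hμ : μ ≠ 0)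
    {top : Ordinal.{u}} (htop : top < lam.ord)
    (hcover : ∀ i ≤ top, κ ≤ i.cof → ∃ t ∈ A, i ≤ t.top) {t : SqCond κ μ lam} (ht : t ∈ A)
    (hle : t.top ≤ top) : SqExt (union A hA hμ top htop hcover) t :=
  ⟨hle, fun _ hi => unionLevel_eq hA ht hi⟩

end SqCond

theorem stmt_9_general (κ μ lam : Cardinal.{u})
    (hlam : lam = Order.succ μ) (hμinf : Cardinal.aleph0 ≤ μ)
    (hκμ : κ < μ)
    (A : Set (SqCond κ μ lam))
    (hdir : ∀ s ∈ A, ∀ t ∈ A, ∃ u ∈ A, SqExt u s ∧ SqExt u t)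
    (hsmallA : Cardinal.mk A < Cardinal.lift.{u + 1} κ) :
    ∃ s : SqCond κ μ lam, ∀ t ∈ A, SqExt s t := by
  let top := ⨆ t : A, t.1.top
  have hbdd : BddAbove (Set.range fun t : A => t.1.top) :=
    ⟨lam.ord, by rintro _ ⟨t, rfl⟩; exact t.1.top_lt.le⟩
  have hκlam : κ ≤ lam.ord.cof := by
    rw [hlam, (Cardinal.isRegular_succ hμinf).cof_ord]
    exact (hκμ.trans (Order.lt_succ μ)).le
  have htop : top < lam.ord := Ordinal.iSup_lt_of_mk_lt_lift_cof
    (hsmallA.trans_le (Cardinal.lift_le.2 hκlam)) fun t => t.1.top_lt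
  have hcover : ∀ i ≤ top, κ ≤ i.cof → ∃ t ∈ A, i ≤ t.top := fun i hi hcof => by
    obtain ⟨t, hit⟩ := Ordinal.exists_le_of_le_iSup_of_mk_lt_lift_cof hi
      (hsmallA.trans_le (Cardinal.lift_le.2 hcof))
    exact ⟨t, t.2, hit⟩
  have hμ : μ ≠ 0 := (Cardinal.aleph0_pos.trans_le hμinf).ne'
  exact ⟨SqCond.union A hdir hμ top htop hcover,
    fun t ht => SqCond.sqExt_union hdir hμ htop hcover ht (le_ciSup hbdd ⟨t, ht⟩)⟩

/-- The partial-square forcing is κ-directed closed: any directed family of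
conditions of size `< κ` (κ regular, `λ = μ⁺`, μ singular) has a lower bound. -/
theorem stmt_9 (κ μ lam : Cardinal.{u}) (hκ : κ.IsRegular)
    (hlam : lam = Order.succ μ) (hμinf : Cardinal.aleph0 ≤ μ) (hμsing : ¬ μ.IsRegular)
    (hκμ : κ < μ)
    (A : Set (SqCond κ μ lam))
    (hdir : ∀ s ∈ A, ∀ t ∈ A, ∃ u ∈ A, SqExt u s ∧ SqExt u t)
    (hsmallA : Cardinal.mk A < Cardinal.lift.{u + 1} κ) :
    ∃ s : SqCond κ μ lam, ∀ t ∈ A, SqExt s t :=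
  stmt_9_general κ μ lam hlam hμinf hκμ A hdir hsmallA
end

section
/- In the threading argument: the set D of conditions ⟨s, ť⟩ in S ∗ T_η with t an element of the top level of s (i.e., dom(s) = γ+1, t ∈ s(γ), and max(t) = γ) is dense in S ∗ T_η, and moreover D is η-closed: every decreasing sequence from D of length < η has a lower bound in D. -/
universe u

/-- A condition in the two-step forcing `S ∗ T_η`: a square condition together
with a club `t` appearing in some `c_α` of it, with `1 < otp(t) < η`. -/
def TCond (κ μ lam η : Cardinal.{u}) : Type (u + 1) :=
  {p : SqCond κ μ lam × Set Ordinal.{u} // ∃ α ≤ p.1.top, p.2 ∈ p.1.c α ∧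
    1 < Ordinal.type (Subrel ((· < ·) : Ordinal.{u} → Ordinal.{u} → Prop) (· ∈ p.2)) ∧
    Ordinal.type (Subrel ((· < ·) : Ordinal.{u} → Ordinal.{u} → Prop) (· ∈ p.2)) <
      Ordinal.lift.{u + 1} η.ord}

/-- `p` extends `q` in `S ∗ T_η`: the square part end-extends and the thread
part end-extends. -/
def TExt {κ μ lam η : Cardinal.{u}} (p q : TCond κ μ lam η) : Prop :=
  SqExt p.1.1 q.1.1 ∧ q.1.2 ⊆ p.1.2 ∧
    ∀ x ∈ p.1.2, x ∉ q.1.2 → ∀ y ∈ q.1.2, y < x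

/-- The set `D` of conditions whose thread lies in the top level of the square
part. -/
def TopSet (κ μ lam η : Cardinal.{u}) : Set (TCond κ μ lam η) :=
  {p | p.1.2 ∈ p.1.1.c p.1.1.top}

/-!
Density: to extend `⟨s, t⟩` with `t ∈ s(α)`, add the single club `t ∪ {α, top s}` as level
`top s + 1`. Its limit points are those of `t` and possibly `α`, so its initial segments at limit
points are initial segments of `t` or `t` itself, which already lie in `s`.

Closure: if the tops of a decreasing sequence from `D` attain their supremum, the condition where
they do is already a lower bound, since a stronger condition from `D` with the same top has the
same thread (a thread is unbounded in its top). Otherwise the supremum `τ` is below `λ` by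
regularity of `λ`, the union `t*` of the threads has size `< η` by regularity of `η`, and `t*`
agrees below each top with the thread there; so `t*` is a club in `τ` whose initial segments at
limit points are already levels of the sequence, and it can be placed alone on level `τ`.
-/

open Cardinal Ordinal Set Order

section Clubs

variable {X : Type*}

theorem inter_Iio_inter_Iio_of_le [LinearOrder X] {T : Set X} {β ρ : X} (h : β ≤ ρ) :
    T ∩ Iio ρ ∩ Iio β = T ∩ Iio β := by
  rw [inter_assoc, Iio_inter_Iio, min_eq_right h]

theorem lt_of_mem_of_notMem_of_inter_Iio_eq [LinearOrder X] {t T : Set X} {ρ : X}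
    (ht : t ⊆ Iio ρ) (hT : T ∩ Iio ρ = t) : ∀ x ∈ T, x ∉ t → ∀ y ∈ t, y < x :=
  fun _ hx hxt _ hy => (ht hy).trans_le (not_lt.mp fun hxρ => hxt (hT ▸ ⟨hx, hxρ⟩))

variable [ConditionallyCompleteLinearOrder X]

def IsClubIn (i : X) (D : Set X) : Prop :=
  D ⊆ Iio i ∧ (∀ γ < i, ∃ δ ∈ D, γ ≤ δ) ∧
    ∀ β < i, (D ∩ Iio β).Nonempty → sSup (D ∩ Iio β) = β → β ∈ D

theorem isClubIn_Iio (i : X) : IsClubIn i (Iio i) :=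
  ⟨subset_rfl, fun γ hγ => ⟨γ, hγ, le_rfl⟩, fun _ hβ _ _ => hβ⟩

theorem isClubIn_of_forall_lt {T : Set X} {τ : X} (hT : T ⊆ Iio τ)
    (h : ∀ i < τ, ∃ ρ, i < ρ ∧ IsClubIn ρ (T ∩ Iio ρ)) : IsClubIn τ T := by
  refine ⟨hT, fun γ hγ => ?_, fun β hβ hne hsup => ?_⟩
  · obtain ⟨ρ, hγρ, -, hunb, -⟩ := h γ hγ
    obtain ⟨δ, hδ, hγδ⟩ := hunb γ hγρ
    exact ⟨δ, hδ.1, hγδ⟩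
  · obtain ⟨ρ, hβρ, -, -, hcl⟩ := h β hβ
    rw [← inter_Iio_inter_Iio_of_le hβρ.le] at hne hsup
    exact (hcl β hβρ hne hsup).1

theorem inter_Iio_insert_insert {t : Set X} {a σ β : X} (hβa : β ≤ a) (haσ : a ≤ σ) :
    insert σ (insert a t) ∩ Iio β = t ∩ Iio β := by
  rw [insert_inter_of_notMem (show σ ∉ Iio β from not_lt.mpr (hβa.trans haσ)),
    insert_inter_of_notMem (show a ∉ Iio β from not_lt.mpr hβa)]

theorem le_of_sSup_inter_Iio_insert_insert {t : Set X} {a σ β : X} (ht : t ⊆ Iio a)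
    (hβσ : β ≤ σ) (hsup : sSup (insert σ (insert a t) ∩ Iio β) = β) : β ≤ a := by
  by_contra! hab
  have hgreatest : IsGreatest (insert σ (insert a t) ∩ Iio β) a := by
    refine ⟨⟨mem_insert_of_mem _ (mem_insert _ _), hab⟩, ?_⟩
    rintro x ⟨rfl | rfl | hx, hxβ⟩
    · exact absurd (hxβ.trans_le hβσ) (lt_irrefl _)
    · exact le_rfl
    · exact (ht hx).le
  exact hab.ne (hgreatest.csSup_eq.symm.trans hsup)

theorem IsClubIn.insert_insert [SuccOrder X] [NoMaxOrder X] {t : Set X} {a σ : X}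
    (ht : IsClubIn a t) (haσ : a ≤ σ) : IsClubIn (succ σ) (insert σ (insert a t)) := by
  obtain ⟨htI, -, htcl⟩ := ht
  refine ⟨?_, fun γ hγ => ⟨σ, mem_insert _ _, lt_succ_iff.mp hγ⟩, fun β hβ hne hsup => ?_⟩
  · rintro x (rfl | rfl | hx)
    · exact lt_succ x
    · exact lt_succ_of_le haσ
    · exact lt_succ_of_le ((htI hx).le.trans haσ)
  · have hβa := le_of_sSup_inter_Iio_insert_insert htI (lt_succ_iff.mp hβ) hsup
    rcases hβa.lt_or_eq with hlt | rfl
    · rw [inter_Iio_insert_insert hβa haσ] at hne hsup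
      exact mem_insert_of_mem _ (mem_insert_of_mem _ (htcl β hlt hne hsup))
    · exact mem_insert_of_mem _ (mem_insert _ _)

end Clubs

theorem Cardinal.mk_insert_lt {α : Type*} {s : Set α} {a : α} {c : Cardinal} (hc : ℵ₀ ≤ c)
    (hs : #s < c) : #(insert a s : Set α) < c :=
  mk_insert_le.trans_lt (add_lt_of_lt hc hs (one_lt_aleph0.trans_le hc))

noncomputable abbrev otp (A : Set Ordinal.{u}) : Ordinal.{u + 1} :=
  type (Subrel ((· < ·) : Ordinal.{u} → Ordinal.{u} → Prop) (· ∈ A))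

theorem otp_mono {A B : Set Ordinal.{u}} (h : A ⊆ B) : otp A ≤ otp B :=
  RelEmbedding.ordinal_type_le ⟨⟨inclusion h, inclusion_injective h⟩, Iff.rfl⟩

theorem otp_lt_lift_ord_iff {A : Set Ordinal.{u}} {c : Cardinal.{u}} :
    otp A < Ordinal.lift.{u + 1} c.ord ↔ #A < Cardinal.lift.{u + 1} c := by
  rw [lift_ord, lt_ord, card_type]

theorem otp_Iio (o : Ordinal.{u}) : otp (Iio o) = Ordinal.lift.{u + 1} o := by
  rw [← typein_ordinal]
  rfl

namespace SqCond

variable {κ μ lam : Cardinal.{u}}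

theorem isClubIn (s : SqCond κ μ lam) {i : Ordinal.{u}} (hi : i ≤ s.top) {D : Set Ordinal.{u}}
    (hD : D ∈ s.c i) : IsClubIn i D :=
  let h := s.club i hi D hD
  ⟨h.1, h.2.1, h.2.2.1⟩

theorem exists_top_eq_c_eq_Iio {γ : Ordinal.{u}} (hγμ : γ ≤ μ.ord) (hγ : γ < lam.ord)
    (hμ : 1 < μ) : ∃ s : SqCond κ μ lam, s.top = γ ∧ ∀ i, s.c i = {Iio i} := by
  have hμ' : 1 < Cardinal.lift.{u + 1} μ := by simpa using hμ
  refine ⟨{ top := γ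
            top_lt := hγ
            c := fun i => {Iio i}
            small := ?_
            nonemp := ?_
            club := ?_
            coh := ?_ }, rfl, fun _ => rfl⟩
  · intro i _
    rwa [mk_singleton]
  · exact fun i _ _ => singleton_nonempty _
  · rintro i hi D rfl
    obtain ⟨hsub, hunb, hcl⟩ := isClubIn_Iio i
    exact ⟨hsub, hunb, hcl, (otp_Iio i).trans_le (Ordinal.lift_le.mpr (hi.trans hγμ))⟩
  · rintro i - D rfl β hβ - -
    rw [inter_eq_right.mpr (Iio_subset_Iio hβ.le)]
    rfl

theorem exists_cap {c : Ordinal.{u} → Set (Set Ordinal.{u})} {γ : Ordinal.{u}}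
    (hγ : γ < lam.ord) (hμ : 1 < μ)
    (hc : ∀ i < γ, ∃ s : SqCond κ μ lam, i ≤ s.top ∧ ∀ j ≤ i, s.c j = c j)
    {t : Set Ordinal.{u}} (ht : IsClubIn γ t) (htμ : otp t ≤ Ordinal.lift.{u + 1} μ.ord)
    (hcoh : ∀ β < γ, (t ∩ Iio β).Nonempty → sSup (t ∩ Iio β) = β → t ∩ Iio β ∈ c β) :
    ∃ s : SqCond κ μ lam, s.top = γ ∧ s.c = Function.update c γ {t} := by
  have hμ' : 1 < Cardinal.lift.{u + 1} μ := by simpa using hμ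
  have hlow : ∀ i ≤ γ, i ≠ γ →
      ∃ s : SqCond κ μ lam, i ≤ s.top ∧ ∀ j ≤ i, Function.update c γ {t} j = s.c j := by
    intro i hi hne
    obtain ⟨s, his, hs⟩ := hc i (hi.lt_of_ne hne)
    refine ⟨s, his, fun j hj => ?_⟩
    rw [Function.update_of_ne (hj.trans_lt (hi.lt_of_ne hne)).ne, hs j hj]
  refine ⟨{ top := γ
            top_lt := hγ
            c := Function.update c γ {t}
            small := ?_
            nonemp := ?_
            club := ?_
            coh := ?_ }, rfl, rfl⟩
  · intro i hi
    rcases eq_or_ne i γ with rfl | hne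
    · rwa [Function.update_self, mk_singleton]
    · obtain ⟨s, his, hs⟩ := hlow i hi hne
      exact hs i le_rfl ▸ s.small i his
  · intro i hi hκ
    rcases eq_or_ne i γ with rfl | hne
    · rw [Function.update_self]
      exact singleton_nonempty t
    · obtain ⟨s, his, hs⟩ := hlow i hi hne
      exact hs i le_rfl ▸ s.nonemp i his hκ
  · intro i hi D hD
    rcases eq_or_ne i γ with rfl | hne
    · rw [Function.update_self, mem_singleton_iff] at hD
      subst hD
      exact ⟨ht.1, ht.2.1, ht.2.2, htμ⟩
    · obtain ⟨s, his, hs⟩ := hlow i hi hne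
      exact s.club i his D (hs i le_rfl ▸ hD)
  · intro i hi D hD β hβ hne hsup
    rcases eq_or_ne i γ with rfl | hiγ
    · rw [Function.update_self, mem_singleton_iff] at hD
      subst hD
      rw [Function.update_of_ne hβ.ne]
      exact hcoh β hβ hne hsup
    · obtain ⟨s, his, hs⟩ := hlow i hi hiγ
      rw [hs β hβ.le]
      exact s.coh i his D (hs i le_rfl ▸ hD) β hβ hne hsup

def chainLevels {ι : Type*} (s : ι → SqCond κ μ lam) (i : Ordinal.{u}) : Set (Set Ordinal.{u}) :=
  {D | ∃ a, i ≤ (s a).top ∧ D ∈ (s a).c i}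

theorem chainLevels_eq {ι : Type*} [LinearOrder ι] {s : ι → SqCond κ μ lam}
    (hs : ∀ a b, a ≤ b → SqExt (s b) (s a)) {a : ι} {i : Ordinal.{u}} (hi : i ≤ (s a).top) :
    chainLevels s i = (s a).c i := by
  refine Subset.antisymm (fun D ⟨b, hib, hD⟩ => ?_) fun D hD => ⟨a, hi, hD⟩
  rcases le_total a b with hab | hba
  · rwa [(hs a b hab).2 i hi] at hD
  · rwa [(hs b a hba).2 i hib]

end SqCond

namespace TCond

variable {κ μ lam η : Cardinal.{u}}

abbrev sq (p : TCond κ μ lam η) : SqCond κ μ lam := p.1.1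

abbrev thread (p : TCond κ μ lam η) : Set Ordinal.{u} := p.1.2

def ofTop (s : SqCond κ μ lam) (t : Set Ordinal.{u}) (ht : t ∈ s.c s.top) (h1 : 1 < otp t)
    (hη : otp t < Ordinal.lift.{u + 1} η.ord) : TCond κ μ lam η :=
  ⟨(s, t), s.top, le_rfl, ht, h1, hη⟩

theorem ofTop_mem_topSet {s : SqCond κ μ lam} {t : Set Ordinal.{u}} (ht : t ∈ s.c s.top)
    (h1 : 1 < otp t) (hη : otp t < Ordinal.lift.{u + 1} η.ord) :
    ofTop s t ht h1 hη ∈ TopSet κ μ lam η :=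
  ht

theorem one_lt_otp_thread (p : TCond κ μ lam η) : 1 < otp p.thread :=
  p.2.choose_spec.2.2.1

theorem mk_thread_lt (p : TCond κ μ lam η) : #p.thread < Cardinal.lift.{u + 1} η :=
  otp_lt_lift_ord_iff.mp p.2.choose_spec.2.2.2

theorem isClubIn_thread {p : TCond κ μ lam η} (hp : p ∈ TopSet κ μ lam η) :
    IsClubIn p.sq.top p.thread :=
  p.sq.isClubIn le_rfl hp

theorem thread_inter_Iio_top {p q : TCond κ μ lam η} (hp : p ∈ TopSet κ μ lam η)
    (hqp : TExt q p) : q.thread ∩ Iio p.sq.top = p.thread := by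
  obtain ⟨hsub, hunb, -⟩ := isClubIn_thread hp
  refine Subset.antisymm (fun x ⟨hxq, hxtop⟩ => ?_) (subset_inter hqp.2.1 hsub)
  by_contra hxp
  obtain ⟨y, hyp, hxy⟩ := hunb x hxtop
  exact (hqp.2.2 x hxq hxp y hyp).not_ge hxy

theorem tExt_of_inter_Iio_eq {p q : TCond κ μ lam η} {ρ : Ordinal.{u}} (hsq : SqExt q.sq p.sq)
    (hp : p.thread ⊆ Iio ρ) (hqp : q.thread ∩ Iio ρ = p.thread) : TExt q p :=
  ⟨hsq, hqp.symm.subset.trans inter_subset_left, lt_of_mem_of_notMem_of_inter_Iio_eq hp hqp⟩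

theorem tExt_of_top_le {p q : TCond κ μ lam η} (hp : p ∈ TopSet κ μ lam η)
    (hq : q ∈ TopSet κ μ lam η) (hqp : TExt q p) (htop : q.sq.top ≤ p.sq.top) : TExt p q := by
  have hthread : p.thread = q.thread := by
    rw [← thread_inter_Iio_top hp hqp,
      inter_eq_left.mpr ((isClubIn_thread hq).1.trans (Iio_subset_Iio htop))]
  exact tExt_of_inter_Iio_eq ⟨htop, fun i hi => (hqp.1.2 i (hi.trans htop)).symm⟩
    (isClubIn_thread hq).1 (by rw [hthread, inter_eq_left.mpr (isClubIn_thread hq).1])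

end TCond

section Forcing

variable {κ μ lam η : Cardinal.{u}}

open TCond

theorem topSet_nonempty (hη : ℵ₀ ≤ η) (hημ : η ≤ μ) (hlam : ℵ₀ ≤ lam) :
    (TopSet κ μ lam η).Nonempty := by
  have htwo : ∀ {c : Cardinal.{u}}, ℵ₀ ≤ c → (2 : Ordinal) < c.ord := fun hc =>
    (natCast_lt_omega0 2).trans_le (omega0_le_ord.mpr hc)
  obtain ⟨s, hstop, hsc⟩ := SqCond.exists_top_eq_c_eq_Iio (κ := κ) (htwo (hη.trans hημ)).le
    (htwo hlam) (one_lt_aleph0.trans_le (hη.trans hημ))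
  have hs : Iio 2 ∈ s.c s.top := by
    rw [hsc, hstop]
    rfl
  refine ⟨ofTop s (Iio 2) hs ?_ ?_, ofTop_mem_topSet ..⟩
  · rw [otp_Iio]
    simp
  · exact (otp_Iio 2).trans_lt (Ordinal.lift_lt.mpr (htwo hη))

theorem exists_mem_topSet_tExt (hη : ℵ₀ ≤ η) (hημ : η ≤ μ) (hlam : ℵ₀ ≤ lam)
    (p : TCond κ μ lam η) : ∃ q ∈ TopSet κ μ lam η, TExt q p := by
  obtain ⟨α, hα, htα, -⟩ := p.2
  have ht := p.sq.isClubIn hα htα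
  set t' := insert p.sq.top (insert α p.thread)
  have htt' : t' ∩ Iio α = p.thread := by
    rw [inter_Iio_insert_insert le_rfl hα, inter_eq_left.mpr ht.1]
  have hcard : #t' < Cardinal.lift.{u + 1} η := by
    have hη' : ℵ₀ ≤ Cardinal.lift.{u + 1} η := aleph0_le_lift.mpr hη
    exact mk_insert_lt hη' (mk_insert_lt hη' p.mk_thread_lt)
  have hcoh : ∀ β < succ p.sq.top, (t' ∩ Iio β).Nonempty → sSup (t' ∩ Iio β) = β →
      t' ∩ Iio β ∈ p.sq.c β := by
    intro β hβ hne hsup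
    have hβα := le_of_sSup_inter_Iio_insert_insert ht.1 (lt_succ_iff.mp hβ) hsup
    rcases hβα.lt_or_eq with hlt | rfl
    · rw [inter_Iio_insert_insert hβα hα] at hne hsup ⊢
      exact p.sq.coh α hα _ htα β hlt hne hsup
    · rwa [htt']
  obtain ⟨s, hstop, hsc⟩ := SqCond.exists_cap (c := p.sq.c)
    ((isSuccLimit_ord hlam).succ_lt p.sq.top_lt) (one_lt_aleph0.trans_le (hη.trans hημ))
    (fun i hi => ⟨p.sq, lt_succ_iff.mp hi, fun _ _ => rfl⟩) (ht.insert_insert hα)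
    (otp_lt_lift_ord_iff.mpr (hcard.trans_le (lift_le.mpr hημ))).le hcoh
  have ht's : t' ∈ s.c s.top := by
    rw [hsc, hstop, Function.update_self]
    rfl
  refine ⟨ofTop s t' ht's (p.one_lt_otp_thread.trans_le (otp_mono (htt' ▸ inter_subset_left)))
    (otp_lt_lift_ord_iff.mpr hcard), ofTop_mem_topSet .., tExt_of_inter_Iio_eq ?_ ht.1 htt'⟩
  refine ⟨hstop ▸ le_succ p.sq.top, fun i hi => ?_⟩
  show s.c i = p.sq.c i
  rw [hsc, Function.update_of_ne (hi.trans_lt (lt_succ p.sq.top)).ne]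

section Chain

variable {ι : Type*} [LinearOrder ι] {f : ι → TCond κ μ lam η}

theorem iUnion_thread_inter_Iio_top (hf : ∀ a, f a ∈ TopSet κ μ lam η)
    (hdec : ∀ a b, a ≤ b → TExt (f b) (f a)) (a : ι) :
    (⋃ b, (f b).thread) ∩ Iio (f a).sq.top = (f a).thread := by
  refine Subset.antisymm ?_ fun x hx => ⟨mem_iUnion_of_mem a hx, (isClubIn_thread (hf a)).1 hx⟩
  rintro x ⟨hx, hxa⟩
  obtain ⟨b, hxb⟩ := mem_iUnion.mp hx
  rcases le_total a b with hab | hba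
  · exact thread_inter_Iio_top (hf a) (hdec a b hab) ▸ ⟨hxb, hxa⟩
  · exact (hdec b a hba).2.1 hxb

theorem exists_lowerBound_of_top_lt [Nonempty ι] (hημ : η ≤ μ) (hμ : 1 < μ)
    (hf : ∀ a, f a ∈ TopSet κ μ lam η) (hdec : ∀ a b, a ≤ b → TExt (f b) (f a))
    {τ : Ordinal.{u}} (hτ : τ < lam.ord) (htop : ∀ a, (f a).sq.top < τ)
    (hcof : ∀ i < τ, ∃ a, i < (f a).sq.top)
    (hcard : #(⋃ a, (f a).thread) < Cardinal.lift.{u + 1} η) :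
    ∃ q ∈ TopSet κ μ lam η, ∀ a, TExt q (f a) := by
  set T := ⋃ a, (f a).thread
  have hT := iUnion_thread_inter_Iio_top hf hdec
  have hsq : ∀ a b, a ≤ b → SqExt (f b).sq (f a).sq := fun a b h => (hdec a b h).1
  have hclub : IsClubIn τ T := by
    refine isClubIn_of_forall_lt
      (iUnion_subset fun a _ hx => ((isClubIn_thread (hf a)).1 hx).trans (htop a)) fun i hi => ?_
    obtain ⟨a, ha⟩ := hcof i hi
    exact ⟨_, ha, (hT a).symm ▸ isClubIn_thread (hf a)⟩
  have hcoh : ∀ β < τ, (T ∩ Iio β).Nonempty → sSup (T ∩ Iio β) = β →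
      T ∩ Iio β ∈ SqCond.chainLevels (fun a => (f a).sq) β := by
    intro β hβ hne hsup
    obtain ⟨a, ha⟩ := hcof β hβ
    rw [← inter_Iio_inter_Iio_of_le ha.le, hT a] at hne hsup ⊢
    exact ⟨a, ha.le, (f a).sq.coh _ le_rfl _ (hf a) β ha hne hsup⟩
  have hlevels : ∀ i < τ, ∃ s : SqCond κ μ lam, i ≤ s.top ∧
      ∀ j ≤ i, s.c j = SqCond.chainLevels (fun a => (f a).sq) j := by
    intro i hi
    obtain ⟨a, ha⟩ := hcof i hi
    exact ⟨(f a).sq, ha.le, fun j hj => (SqCond.chainLevels_eq hsq (hj.trans ha.le)).symm⟩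
  obtain ⟨s, hstop, hsc⟩ := SqCond.exists_cap hτ hμ hlevels hclub
    (otp_lt_lift_ord_iff.mpr (hcard.trans_le (lift_le.mpr hημ))).le hcoh
  have hTs : T ∈ s.c s.top := by
    rw [hsc, hstop, Function.update_self]
    rfl
  obtain ⟨a₀⟩ := ‹Nonempty ι›
  have h1 : 1 < otp T :=
    (f a₀).one_lt_otp_thread.trans_le (otp_mono (subset_iUnion (fun a => (f a).thread) a₀))
  refine ⟨ofTop s T hTs h1 (otp_lt_lift_ord_iff.mpr hcard), ofTop_mem_topSet .., fun a =>
    tExt_of_inter_Iio_eq ⟨hstop ▸ (htop a).le, fun i hi => ?_⟩ (isClubIn_thread (hf a)).1 (hT a)⟩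
  show s.c i = (f a).sq.c i
  rw [hsc, Function.update_of_ne (hi.trans_lt (htop a)).ne, SqCond.chainLevels_eq hsq hi]

end Chain

theorem exists_lowerBound {ι : Type (u + 1)} [LinearOrder ι] [Small.{u} ι] [Nonempty ι]
    (hlam : lam.IsRegular) (hη : η.IsRegular) (hημ : η ≤ μ) (hηlam : η ≤ lam)
    (hι : #ι < Cardinal.lift.{u + 1} η) {f : ι → TCond κ μ lam η}
    (hf : ∀ a, f a ∈ TopSet κ μ lam η) (hdec : ∀ a b, a ≤ b → TExt (f b) (f a)) :
    ∃ q ∈ TopSet κ μ lam η, ∀ a, TExt q (f a) := by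
  have hbdd : BddAbove (range fun a => (f a).sq.top) := bddAbove_of_small
  by_cases hmax : ∃ a₀, (f a₀).sq.top = ⨆ a, (f a).sq.top
  · obtain ⟨a₀, ha₀⟩ := hmax
    refine ⟨f a₀, hf a₀, fun a => ?_⟩
    rcases le_total a a₀ with h | h
    · exact hdec a a₀ h
    · exact tExt_of_top_le (hf a₀) (hf a) (hdec a₀ a h) (ha₀ ▸ le_ciSup hbdd a)
  push Not at hmax
  refine exists_lowerBound_of_top_lt hημ (one_lt_aleph0.trans_le (hη.aleph0_le.trans hημ)) hf hdec
    ?_ (fun a => (le_ciSup hbdd a).lt_of_ne (hmax a)) (fun i hi => (lt_ciSup_iff hbdd).mp hi)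
    ((card_iUnion_lt_iff_forall_of_isRegular hη.lift hι).mpr fun a => (f a).mk_thread_lt)
  refine Ordinal.lift_iSup_lt_of_lt_cof ?_ fun a => (f a).sq.top_lt
  rw [← lift_cof, hlam.cof_ord, Cardinal.lift_id'.{u, u + 1}]
  exact hι.trans_le (lift_le.mpr hηlam)

end Forcing

theorem stmt_10_general (κ μ lam η : Cardinal.{u})
    (hlam : lam = Order.succ μ) (hμinf : Cardinal.aleph0 ≤ μ)
    (hη : η.IsRegular) (hηlam : η < lam) :
    (∀ p : TCond κ μ lam η, ∃ q ∈ TopSet κ μ lam η, TExt q p) ∧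
      ∀ δ < η.ord, ∀ f : {β : Ordinal.{u} // β < δ} → TCond κ μ lam η,
        (∀ a, f a ∈ TopSet κ μ lam η) →
        (∀ a b, a ≤ b → TExt (f b) (f a)) →
        ∃ q ∈ TopSet κ μ lam η, ∀ a, TExt q (f a) := by
  subst hlam
  have hημ : η ≤ μ := lt_succ_iff.mp hηlam
  have hlam : ℵ₀ ≤ succ μ := hμinf.trans (le_succ μ)
  refine ⟨exists_mem_topSet_tExt hη.aleph0_le hημ hlam, fun δ hδ f hf hdec => ?_⟩
  rcases isEmpty_or_nonempty {β : Ordinal.{u} // β < δ} with hempty | hne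
  · obtain ⟨q, hq⟩ := topSet_nonempty (κ := κ) hη.aleph0_le hημ hlam
    exact ⟨q, hq, hempty.elim⟩
  have : Small.{u} {β : Ordinal.{u} // β < δ} := small_Iio δ
  have hδ' : #{β : Ordinal.{u} // β < δ} < Cardinal.lift.{u + 1} η := by
    rw [show #{β : Ordinal.{u} // β < δ} = #(Iio δ) from rfl, Cardinal.mk_Iio_ordinal,
      Cardinal.lift_lt]
    exact lt_ord.mp hδ
  exact exists_lowerBound (isRegular_succ hμinf) hη hημ hηlam.le hδ' hf hdec

/-- The set `D` of conditions `⟨s, ť⟩` with `t` in the top level of `s` is dense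
in `S ∗ T_η`, and `D` is η-closed: every decreasing sequence from `D` of length
`< η` has a lower bound in `D`. -/
theorem stmt_10 (κ μ lam η : Cardinal.{u}) (hκ : κ.IsRegular)
    (hlam : lam = Order.succ μ) (hμinf : Cardinal.aleph0 ≤ μ)
    (hη : η.IsRegular) (hηlam : η < lam) :
    (∀ p : TCond κ μ lam η, ∃ q ∈ TopSet κ μ lam η, TExt q p) ∧
      ∀ δ < η.ord, ∀ f : {β : Ordinal.{u} // β < δ} → TCond κ μ lam η,
        (∀ a, f a ∈ TopSet κ μ lam η) →
        (∀ a b, a ≤ b → TExt (f b) (f a)) →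
        ∃ q ∈ TopSet κ μ lam η, ∀ a, TExt q (f a) :=
  stmt_10_general κ μ lam η hlam hμinf hη hηlam
end
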